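/- arXiv:1804.09062 — 2 statements merged into one kernel-verified Lean document; each statement's English description precedes it below -/
import Mathlib

section
/- Let (S, R, k) be a detailed balanced reaction system with point of detailed balance q, let x0 ∈ ℝ^S_{>0}, and let x* be the unique point of detailed balance in (x0 + H_R) ∩ ℝ^S_{>0}. Then x* is the E-projection of q to the polyhedron (x0 + H_R) ∩ ℝ^S_{≥0}, i.e., x* is the unique minimizer of x ↦ D(x‖q) over (x0 + H_R) ∩ ℝ^S_{≥0}. -/
/-- Extended relative entropy `D(x‖y)` (real-valued form, valid when `y` has
positive entries and `x` has nonnegative entries). -/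
noncomputable def KL {ι : Type*} [Fintype ι] (x y : ι → ℝ) : ℝ :=
  ∑ i, (x i * Real.log (x i / y i) - x i + y i)

/-- `q` is a point of detailed balance for the reaction system `(S, R, k)`. -/
def IsDetailedBalancePoint {S : Type*} [Fintype S]
    (R : Finset ((S → ℕ) × (S → ℕ))) (k : (S → ℕ) × (S → ℕ) → ℝ)
    (q : S → ℝ) : Prop :=
  (∀ i, 0 < q i) ∧
    ∀ r ∈ R, k r * ∏ i, q i ^ r.1 i = k (r.2, r.1) * ∏ i, q i ^ r.2 i

/-- The stoichiometric subspace `H_R`: the real span of `{y' − y : (y,y') ∈ R}`. -/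
def stoichSubspace {S : Type*} [Fintype S]
    (R : Finset ((S → ℕ) × (S → ℕ))) : Submodule ℝ (S → ℝ) :=
  Submodule.span ℝ ((fun r : (S → ℕ) × (S → ℕ) => fun i => ((r.2 i : ℝ) - (r.1 i : ℝ))) '' ↑R)
/-!
Detailed balance at `q` and at `x*` makes `log x* - log q` orthogonal to every reaction vector,
hence to `H_R`. The three-point identity
`D(z‖q) = D(z‖x*) + ⟨z - x*, log x* - log q⟩ + D(x*‖q)`
therefore reduces to `D(z‖q) = D(z‖x*) + D(x*‖q)` on `x0 + H_R`, and Gibbs' inequality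
`D(z‖x*) ≥ 0`, with equality only at `z = x*`, concludes.
-/

open Real InformationTheory

lemma mul_log_div_sub_add_eq_mul_klFun (a : ℝ) {b : ℝ} (hb : b ≠ 0) :
    a * log (a / b) - a + b = b * klFun (a / b) := by
  rw [klFun]
  field_simp
  ring

lemma mul_log_div_eq_add (a : ℝ) {b c : ℝ} (hb : b ≠ 0) (hc : c ≠ 0) :
    a * log (a / c) = a * log (a / b) + a * log (b / c) := by
  rcases eq_or_ne a 0 with rfl | ha
  · simp
  · rw [← mul_add, ← log_mul (by positivity) (by positivity), div_mul_div_cancel₀ hb]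

section KL

variable {ι : Type*} [Fintype ι]

lemma KL_nonneg {x y : ι → ℝ} (hx : ∀ i, 0 ≤ x i) (hy : ∀ i, 0 < y i) : 0 ≤ KL x y :=
  Finset.sum_nonneg fun i _ => by
    rw [mul_log_div_sub_add_eq_mul_klFun _ (hy i).ne']
    exact mul_nonneg (hy i).le (klFun_nonneg (div_nonneg (hx i) (hy i).le))

lemma KL_eq_zero_iff {x y : ι → ℝ} (hx : ∀ i, 0 ≤ x i) (hy : ∀ i, 0 < y i) :
    KL x y = 0 ↔ x = y := by
  have hterm (i : ι) : x i * log (x i / y i) - x i + y i = y i * klFun (x i / y i) :=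
    mul_log_div_sub_add_eq_mul_klFun _ (hy i).ne'
  have hterm_nonneg (i : ι) : 0 ≤ y i * klFun (x i / y i) :=
    mul_nonneg (hy i).le (klFun_nonneg (div_nonneg (hx i) (hy i).le))
  simp only [KL, hterm, Finset.sum_eq_zero_iff_of_nonneg fun i _ => hterm_nonneg i,
    Finset.mem_univ, true_implies, mul_eq_zero, (hy _).ne', false_or,
    klFun_eq_zero_iff (div_nonneg (hx _) (hy _).le), div_eq_one_iff_eq (hy _).ne', funext_iff]

lemma KL_eq_KL_add_dotProduct_add_KL (z : ι → ℝ) {x q : ι → ℝ}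
    (hx : ∀ i, x i ≠ 0) (hq : ∀ i, q i ≠ 0) :
    KL z q = KL z x + (z - x) ⬝ᵥ (fun i => log (x i / q i)) + KL x q := by
  simp only [KL, dotProduct, Pi.sub_apply, ← Finset.sum_add_distrib]
  refine Finset.sum_congr rfl fun i _ => ?_
  rw [mul_log_div_eq_add (z i) (hx i) (hq i)]
  ring

end KL

section DetailedBalance

variable {S : Type*} [Fintype S] {R : Finset ((S → ℕ) × (S → ℕ))}
  {k : (S → ℕ) × (S → ℕ) → ℝ}

lemma dotProduct_eq_zero_of_mem_stoichSubspace {L : S → ℝ}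
    (hL : ∀ r ∈ R, (fun i => (r.2 i : ℝ) - r.1 i) ⬝ᵥ L = 0)
    {v : S → ℝ} (hv : v ∈ stoichSubspace R) : v ⬝ᵥ L = 0 := by
  have hle : stoichSubspace R ≤ LinearMap.ker ((dotProductBilin ℝ ℝ).flip L) :=
    Submodule.span_le.2 (by rintro _ ⟨r, hr, rfl⟩; exact hL r hr)
  exact hle hv

lemma IsDetailedBalancePoint.dotProduct_log_eq {x : S → ℝ}
    (hx : IsDetailedBalancePoint R k x) {r : (S → ℕ) × (S → ℕ)} (hr : r ∈ R)
    (hk : 0 < k r) (hk' : 0 < k (r.2, r.1)) :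
    (fun i => (r.2 i : ℝ) - r.1 i) ⬝ᵥ (fun i => log (x i)) =
      log (k r) - log (k (r.2, r.1)) := by
  have hpow (y : S → ℕ) (i : S) : x i ^ y i ≠ 0 := (pow_pos (hx.1 i) _).ne'
  have hprod (y : S → ℕ) : ∏ i, x i ^ y i ≠ 0 := Finset.prod_ne_zero_iff.2 fun i _ => hpow y i
  have hlog := congrArg log (hx.2 r hr)
  rw [log_mul hk.ne' (hprod _), log_mul hk'.ne' (hprod _),
    log_prod fun i _ => hpow _ i, log_prod fun i _ => hpow _ i] at hlog
  simp only [log_pow] at hlog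
  simp only [dotProduct, sub_mul, Finset.sum_sub_distrib]
  linarith

lemma IsDetailedBalancePoint.dotProduct_log_div_eq_zero
    (hk : ∀ r ∈ R, 0 < k r) (hrev : ∀ r ∈ R, (r.2, r.1) ∈ R) {x q : S → ℝ}
    (hx : IsDetailedBalancePoint R k x) (hq : IsDetailedBalancePoint R k q)
    {v : S → ℝ} (hv : v ∈ stoichSubspace R) :
    v ⬝ᵥ (fun i => log (x i / q i)) = 0 := by
  refine dotProduct_eq_zero_of_mem_stoichSubspace (fun r hr => ?_) hv
  have hlog : (fun i => log (x i / q i)) = (fun i => log (x i)) - fun i => log (q i) :=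
    funext fun i => log_div (hx.1 i).ne' (hq.1 i).ne'
  rw [hlog, dotProduct_sub, hx.dotProduct_log_eq hr (hk r hr) (hk _ (hrev r hr)),
    hq.dotProduct_log_eq hr (hk r hr) (hk _ (hrev r hr)), sub_self]

end DetailedBalance

theorem detailed_balance_point_is_eprojection_general
    {S : Type*} [Fintype S]
    (R : Finset ((S → ℕ) × (S → ℕ))) (k : (S → ℕ) × (S → ℕ) → ℝ)
    (hk : ∀ r ∈ R, 0 < k r)
    (hrev : ∀ r ∈ R, (r.2, r.1) ∈ R)
    (q : S → ℝ) (hq : IsDetailedBalancePoint R k q)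
    (x0 : S → ℝ)
    (xstar : S → ℝ)
    (hstar : xstar - x0 ∈ stoichSubspace R ∧ IsDetailedBalancePoint R k xstar) :
    (∀ z : S → ℝ, z - x0 ∈ stoichSubspace R → (∀ i, 0 ≤ z i) →
        KL xstar q ≤ KL z q) ∧
    (∀ z : S → ℝ, z - x0 ∈ stoichSubspace R → (∀ i, 0 ≤ z i) →
        KL z q = KL xstar q → z = xstar) := by
  obtain ⟨hstar_mem, hstar_db⟩ := hstar
  have hpyth (z : S → ℝ) (hz : z - x0 ∈ stoichSubspace R) :
      KL z q = KL z xstar + KL xstar q := by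
    have hdiff : z - xstar ∈ stoichSubspace R := by
      simpa using Submodule.sub_mem _ hz hstar_mem
    rw [KL_eq_KL_add_dotProduct_add_KL z (fun i => (hstar_db.1 i).ne') (fun i => (hq.1 i).ne'),
      hstar_db.dotProduct_log_div_eq_zero hk hrev hq hdiff, add_zero]
  refine ⟨fun z hz hz_nonneg => ?_, fun z hz hz_nonneg hKL => ?_⟩
  · linarith [hpyth z hz, KL_nonneg hz_nonneg hstar_db.1]
  · exact (KL_eq_zero_iff hz_nonneg hstar_db.1).1 (by linarith [hpyth z hz])

/-- the unique point of detailed balance `x*` in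
`(x0 + H_R) ∩ ℝ^S_{>0}` is the unique minimizer of `x ↦ D(x‖q)` over the
polyhedron `(x0 + H_R) ∩ ℝ^S_{≥0}`. -/
theorem detailed_balance_point_is_eprojection
    {S : Type*} [Fintype S]
    (R : Finset ((S → ℕ) × (S → ℕ))) (k : (S → ℕ) × (S → ℕ) → ℝ)
    (hk : ∀ r ∈ R, 0 < k r)
    (hrev : ∀ r ∈ R, (r.2, r.1) ∈ R)
    (q : S → ℝ) (hq : IsDetailedBalancePoint R k q)
    (x0 : S → ℝ) (hx0 : ∀ i, 0 < x0 i)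
    (xstar : S → ℝ)
    (hstar : xstar - x0 ∈ stoichSubspace R ∧ IsDetailedBalancePoint R k xstar)
    (huniq : ∀ z : S → ℝ, z - x0 ∈ stoichSubspace R →
      IsDetailedBalancePoint R k z → z = xstar) :
    (∀ z : S → ℝ, z - x0 ∈ stoichSubspace R → (∀ i, 0 ≤ z i) →
        KL xstar q ≤ KL z q) ∧
    (∀ z : S → ℝ, z - x0 ∈ stoichSubspace R → (∀ i, 0 ≤ z i) →
        KL z q = KL xstar q → z = xstar) :=
  detailed_balance_point_is_eprojection_general R k hk hrev q hq x0 xstar hstar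
end

section
/- (EM scheme, stationarity of the limit.) In the setting of the EM scheme: let A = (a_{ij}) be an m×n matrix of nonnegative integers, c ∈ ℝ^n_{>0}, y_A(θ)_j := c_j Π_{i=1}^m θ_i^{a_{ij}}; let 𝒮 be an integer matrix with n columns, {b_1,…,b_r} a ℤ-basis of (ker 𝒮) ∩ ℤ^n; let k_l⁺, k_l⁻ > 0 and d_l, e_l ∈ ℤ^m_{≥0} satisfy (k_l⁻/k_l⁺)·θ^{e_l − d_l} = y_A(θ)^{b_l} for all θ ∈ ℝ^m_{>0}; and let (x, θ) : [0,∞) → ℝ^n_{>0} × ℝ^m_{>0} be differentiable with ẋ(t) = Σ_l b_l ( k_l⁻ θ(t)^{e_l} x(t)^{b_l⁻} − k_l⁺ θ(t)^{d_l} x(t)^{b_l⁺} ) and θ̇(t) = A(x(t) − y_A(θ(t))). Suppose the limit (x̂, θ̂) := lim_{t→∞} (x(t), θ(t)) exists with x̂ ∈ ℝ^n_{>0} and θ̂ ∈ ℝ^m_{>0}. Then (i) the gradient of θ ↦ D(x̂‖y_A(θ)) vanishes at θ̂, and (ii) the vector log x̂ − log y_A(θ̂) ∈ ℝ^n is orthogonal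 to the real span of {b_1,…,b_r}. -/
/-- The exponential-family parametrization `y_A(θ)_j = c_j ∏_i θ_i^{a_{ij}}`. -/
def yA {m n : ℕ} (A : Matrix (Fin m) (Fin n) ℕ) (c : Fin n → ℝ)
    (θ : Fin m → ℝ) : Fin n → ℝ :=
  fun j => c j * ∏ i, θ i ^ A i j

/-!
A trajectory that converges and whose velocity converges must have limiting velocity zero: by the
mean value theorem its unit increments are values of the velocity, and they tend to zero. Hence
`(x̂, θ̂)` is an equilibrium of both equations.

Since `∂ log y_A(θ)_j / ∂θ_i = a_ij / θ_i`, the `θ`-partial derivatives of `D(x̂‖y_A(θ))` are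
`-(A (x̂ - y_A(θ)))_i / θ_i`, which vanish at the equilibrium of the `θ`-equation.

With `w = log x̂ - log y_A(θ̂)` and `s_l = ⟨w, b_l⟩`, the rate relation turns the `l`-th coefficient
of the `x`-equation at the limit into `P_l (exp (-s_l) - 1)` with `P_l > 0`. Pairing the
equilibrium identity `∑_l P_l (exp (-s_l) - 1) b_l = 0` with `w` gives
`∑_l P_l (exp (-s_l) - 1) s_l = 0`, a sum of nonpositive terms each of which vanishes only when
`s_l = 0`.
-/

open Filter Topology Finset Real

lemma eq_zero_of_hasDerivAt_of_tendsto_real {u u' : ℝ → ℝ} {L v : ℝ}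
    (hu : ∀ᶠ t in atTop, HasDerivAt u (u' t) t) (huL : Tendsto u atTop (𝓝 L))
    (hu' : Tendsto u' atTop (𝓝 v)) : v = 0 := by
  -- by the mean value theorem, each unit increment of `u` is a value of `u'` further out
  have hinc : Tendsto (fun t => u (t + 1) - u t) atTop (𝓝 v) := by
    refine tendsto_atTop'.2 fun s hs => ?_
    obtain ⟨T, hT⟩ := eventually_atTop.1 (hu.and (hu'.eventually hs))
    refine ⟨T, fun t ht => ?_⟩
    obtain ⟨ξ, hξ, hslope⟩ := exists_hasDerivAt_eq_slope u u' (lt_add_one t)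
      (fun τ hτ => (hT τ (ht.trans hτ.1)).1.continuousAt.continuousWithinAt)
      (fun τ hτ => (hT τ (ht.trans hτ.1.le)).1)
    rw [add_sub_cancel_left, div_one] at hslope
    exact hslope ▸ (hT ξ (ht.trans hξ.1.le)).2
  have hinc0 : Tendsto (fun t => u (t + 1) - u t) atTop (𝓝 0) := by
    simpa using (huL.comp (tendsto_atTop_add_const_right _ 1 tendsto_id)).sub huL
  exact tendsto_nhds_unique hinc hinc0

lemma eq_zero_of_hasDerivAt_of_tendsto {E : Type*} [NormedAddCommGroup E] [NormedSpace ℝ E]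
    {u u' : ℝ → E} {L v : E} (hu : ∀ᶠ t in atTop, HasDerivAt u (u' t) t)
    (huL : Tendsto u atTop (𝓝 L)) (hu' : Tendsto u' atTop (𝓝 v)) : v = 0 :=
  SeparatingDual.eq_zero_of_forall_dual_eq_zero fun f =>
    eq_zero_of_hasDerivAt_of_tendsto_real
      (hu.mono fun _ ht => f.hasFDerivAt.comp_hasDerivAt _ ht)
      ((f.continuous.tendsto L).comp huL) ((f.continuous.tendsto v).comp hu')

lemma hasFDerivAt_prod_pow {ι : Type*} [Fintype ι] (a : ι → ℕ) {θ : ι → ℝ}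
    (hθ : ∀ i, θ i ≠ 0) :
    HasFDerivAt (fun θ' : ι → ℝ => ∏ i, θ' i ^ a i)
      ((∏ i, θ i ^ a i) • ∑ i, (a i / θ i) •
        (ContinuousLinearMap.proj i : (_ → ℝ) →L[ℝ] ℝ)) θ := by
  classical
  have h := HasFDerivAt.finsetProd (u := univ) (g := fun i (θ' : ι → ℝ) => θ' i ^ a i)
    fun i _ => (hasDerivAt_pow (a i) (θ i)).comp_hasFDerivAt θ (hasFDerivAt_apply (𝕜 := ℝ) i θ)
  refine h.congr_fderiv ?_
  rw [smul_sum]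
  refine sum_congr rfl fun i _ => ?_
  rw [smul_smul, smul_smul, ← prod_erase_mul _ _ (mem_univ i)]
  congr 1
  rcases eq_or_ne (a i) 0 with ha | ha
  · simp [ha]
  · rw [← pow_sub_one_mul ha]
    field_simp [hθ i]

section yA

variable {m n : ℕ} (A : Matrix (Fin m) (Fin n) ℕ) (c : Fin n → ℝ)

@[fun_prop]
lemma continuous_yA : Continuous (yA A c) := by
  unfold yA; fun_prop

lemma yA_pos (hc : ∀ j, 0 < c j) {θ : Fin m → ℝ} (hθ : ∀ i, 0 < θ i) (j : Fin n) :
    0 < yA A c θ j :=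
  mul_pos (hc j) (prod_pos fun i _ => pow_pos (hθ i) _)

lemma hasFDerivAt_yA {θ : Fin m → ℝ} (hθ : ∀ i, θ i ≠ 0) (j : Fin n) :
    HasFDerivAt (fun θ' => yA A c θ' j)
      (yA A c θ j • ∑ i, ((A i j : ℝ) / θ i) •
        (ContinuousLinearMap.proj i : (_ → ℝ) →L[ℝ] ℝ)) θ := by
  simpa only [yA, mul_smul] using (hasFDerivAt_prod_pow (fun i => A i j) hθ).const_mul (c j)

lemma hasDerivAt_mul_log_div_sub_add (x : ℝ) {y : ℝ} (hy : y ≠ 0) :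
    HasDerivAt (fun y => x * log (x / y) - x + y) (1 - x / y) y := by
  have hlog : ∀ y ≠ 0, x * log (x / y) = x * log x - x * log y := fun y hy => by
    rcases eq_or_ne x 0 with rfl | hx
    · simp
    · rw [log_div hx hy, mul_sub]
  have h := (((hasDerivAt_log hy).const_mul x).const_sub (x * log x)).sub_const x |>.add
    (hasDerivAt_id y)
  refine (h.congr_deriv (by ring)).congr_of_eventuallyEq ?_
  filter_upwards [eventually_ne_nhds hy] with y' hy'
  simp [hlog y' hy']

lemma hasFDerivAt_KL_yA (x : Fin n → ℝ) (hc : ∀ j, c j ≠ 0) {θ : Fin m → ℝ}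
    (hθ : ∀ i, θ i ≠ 0) :
    HasFDerivAt (fun θ' => KL x (yA A c θ'))
      (∑ i, (-(∑ j, (A i j : ℝ) * (x j - yA A c θ j)) / θ i) •
        (ContinuousLinearMap.proj i : (_ → ℝ) →L[ℝ] ℝ)) θ := by
  have hy : ∀ j, yA A c θ j ≠ 0 := fun j =>
    mul_ne_zero (hc j) (prod_ne_zero_iff.2 fun i _ => pow_ne_zero _ (hθ i))
  have h := HasFDerivAt.fun_sum (u := univ)
    (A := fun j => (fun y => x j * log (x j / y) - x j + y) ∘ fun θ' => yA A c θ' j) fun j _ =>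
    (hasDerivAt_mul_log_div_sub_add (x j) (hy j)).comp_hasFDerivAt θ (hasFDerivAt_yA A c hθ j)
  refine h.congr_fderiv ?_
  ext v
  have hxy : ∀ j, (1 - x j / yA A c θ j) * yA A c θ j = -(x j - yA A c θ j) := fun j => by
    field_simp [hy j]; ring
  simp only [FunLike.coe_sum, Finset.sum_apply, FunLike.coe_smul,
    Pi.smul_apply, ContinuousLinearMap.proj_apply, smul_eq_mul, ← mul_assoc, hxy, mul_sum]
  rw [sum_comm]
  refine sum_congr rfl fun i _ => ?_
  rw [← sum_neg_distrib, sum_div, sum_mul]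
  exact sum_congr rfl fun j _ => by ring

end yA

lemma exp_neg_sub_one_mul_self_nonpos (s : ℝ) : (exp (-s) - 1) * s ≤ 0 := by
  rcases le_total s 0 with hs | hs
  · exact mul_nonpos_of_nonneg_of_nonpos (sub_nonneg.2 (one_le_exp (neg_nonneg.2 hs))) hs
  · exact mul_nonpos_of_nonpos_of_nonneg (sub_nonpos.2 (exp_le_one_iff.2 (neg_nonpos.2 hs))) hs

lemma exp_neg_sub_one_mul_self_eq_zero_iff {s : ℝ} : (exp (-s) - 1) * s = 0 ↔ s = 0 := by
  simp [sub_eq_zero]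

lemma dotProduct_eq_zero_of_mem_span {ι κ : Type*} [Fintype ι] [Fintype κ] {w : κ → ℝ}
    {B : ι → κ → ℝ} {P R : ι → ℝ} (hP : ∀ l, 0 < P l)
    (hR : ∀ l, R l = P l * (exp (-(w ⬝ᵥ B l)) - 1)) (hsum : ∑ l, R l • B l = 0) {v : κ → ℝ}
    (hv : v ∈ Submodule.span ℝ (Set.range B)) : w ⬝ᵥ v = 0 := by
  have hzero : ∑ l, P l * ((exp (-(w ⬝ᵥ B l)) - 1) * (w ⬝ᵥ B l)) = 0 := by
    calc ∑ l, P l * ((exp (-(w ⬝ᵥ B l)) - 1) * (w ⬝ᵥ B l)) = w ⬝ᵥ ∑ l, R l • B l := by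
          simp only [dotProduct_sum, dotProduct_smul, hR, smul_eq_mul, mul_assoc]
      _ = 0 := by rw [hsum, dotProduct_zero]
  have hB : ∀ l, w ⬝ᵥ B l = 0 := fun l => by
    have hterm := (sum_eq_zero_iff_of_nonpos fun l _ => mul_nonpos_of_nonneg_of_nonpos
      (hP l).le (exp_neg_sub_one_mul_self_nonpos _)).1 hzero l (mem_univ l)
    exact exp_neg_sub_one_mul_self_eq_zero_iff.1
      ((mul_eq_zero.1 hterm).resolve_left (hP l).ne')
  have hspan : Submodule.span ℝ (Set.range B) ≤ LinearMap.ker (dotProductBilin ℝ ℝ w) :=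
    Submodule.span_le.2 (Set.range_subset_iff.2 hB)
  exact hspan hv

lemma net_rate_eq_mul_exp_neg_sub_one {ι κ : Type*} [Fintype ι] [Fintype κ] {kp km : ℝ}
    (hkp : kp ≠ 0) {θ : κ → ℝ} (hθ : ∀ i, θ i ≠ 0) {x y : ι → ℝ} (hx : ∀ j, 0 < x j)
    (hy : ∀ j, 0 < y j) {d e : κ → ℕ} {b : ι → ℤ}
    (hrate : km / kp * ∏ i, θ i ^ ((e i : ℤ) - (d i : ℤ)) = ∏ j, y j ^ b j) :
    km * (∏ i, θ i ^ e i) * (∏ j, x j ^ (-b j).toNat)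
        - kp * (∏ i, θ i ^ d i) * (∏ j, x j ^ (b j).toNat)
      = kp * (∏ i, θ i ^ d i) * (∏ j, x j ^ (b j).toNat) *
          (exp (-((fun j => log (x j) - log (y j)) ⬝ᵥ fun j => (b j : ℝ))) - 1) := by
  have hkm : km * ∏ i, θ i ^ e i = kp * (∏ i, θ i ^ d i) * ∏ j, y j ^ b j := by
    have hsplit : ∏ i, θ i ^ e i = (∏ i, θ i ^ d i) * ∏ i, θ i ^ ((e i : ℤ) - (d i : ℤ)) := by
      rw [← prod_mul_distrib]
      refine prod_congr rfl fun i _ => ?_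
      rw [← zpow_natCast, ← zpow_natCast, ← zpow_add₀ (hθ i), add_sub_cancel]
    rw [← hrate, hsplit]
    field_simp
  have hneg : ∏ j, x j ^ (-b j).toNat = (∏ j, x j ^ (b j).toNat) * ∏ j, x j ^ (-b j) := by
    rw [← prod_mul_distrib]
    refine prod_congr rfl fun j _ => ?_
    rw [← zpow_natCast, ← zpow_natCast, ← zpow_add₀ (hx j).ne']
    congr 1
    omega
  have hexp : (∏ j, y j ^ b j) * ∏ j, x j ^ (-b j) =
      exp (-((fun j => log (x j) - log (y j)) ⬝ᵥ fun j => (b j : ℝ))) := by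
    rw [← prod_mul_distrib, dotProduct, ← sum_neg_distrib, exp_sum]
    refine prod_congr rfl fun j _ => ?_
    rw [← exp_log (zpow_pos (hy j) (b j)), ← exp_log (zpow_pos (hx j) (-b j)), ← exp_add,
      log_zpow, log_zpow]
    push_cast
    ring_nf
  rw [hkm, hneg, ← hexp]
  ring

theorem em_scheme_limit_stationary_general
    {m n r : ℕ} (A : Matrix (Fin m) (Fin n) ℕ) (c : Fin n → ℝ)
    (hc : ∀ j, 0 < c j)
    (b : Fin r → Fin n → ℤ)
    (kp km : Fin r → ℝ) (hkp : ∀ l, 0 < kp l)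
    (d e : Fin r → Fin m → ℕ)
    (hrates : ∀ θ' : Fin m → ℝ, (∀ i, 0 < θ' i) → ∀ l,
      km l / kp l * ∏ i, θ' i ^ ((e l i : ℤ) - (d l i : ℤ)) =
        ∏ j, (yA A c θ' j) ^ (b l j))
    (x : ℝ → Fin n → ℝ) (θ : ℝ → Fin m → ℝ)
    (hxode : ∀ t, 0 ≤ t → HasDerivAt x
      (∑ l, (km l * (∏ i, θ t i ^ e l i) * (∏ j, x t j ^ (-(b l j)).toNat)
            - kp l * (∏ i, θ t i ^ d l i) * (∏ j, x t j ^ (b l j).toNat)) •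
        (fun j => (b l j : ℝ))) t)
    (hθode : ∀ t, 0 ≤ t → HasDerivAt θ
      (fun i => ∑ j, (A i j : ℝ) * (x t j - yA A c (θ t) j)) t)
    (xhat : Fin n → ℝ) (θhat : Fin m → ℝ)
    (hxhat : ∀ j, 0 < xhat j) (hθhat : ∀ i, 0 < θhat i)
    (hlim : Filter.Tendsto (fun t => (x t, θ t)) Filter.atTop (nhds (xhat, θhat))) :
    HasFDerivAt (fun θ' : Fin m → ℝ => KL xhat (yA A c θ'))
        (0 : (Fin m → ℝ) →L[ℝ] ℝ) θhat ∧
    ∀ v : Fin n → ℝ,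
      v ∈ Submodule.span ℝ (Set.range fun l => fun j => (b l j : ℝ)) →
      ∑ j, (Real.log (xhat j) - Real.log (yA A c θhat j)) * v j = 0 := by
  have hθfield : Continuous fun p : (Fin n → ℝ) × (Fin m → ℝ) =>
      fun i => ∑ j, (A i j : ℝ) * (p.1 j - yA A c p.2 j) := by fun_prop
  have hxfield : Continuous fun p : (Fin n → ℝ) × (Fin m → ℝ) =>
      ∑ l, (km l * (∏ i, p.2 i ^ e l i) * (∏ j, p.1 j ^ (-(b l j)).toNat)
        - kp l * (∏ i, p.2 i ^ d l i) * (∏ j, p.1 j ^ (b l j).toNat)) •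
          (fun j => (b l j : ℝ)) := by fun_prop
  have hθlim := (hθfield.tendsto _).comp hlim
  have hxlim := (hxfield.tendsto _).comp hlim
  have hθeq : ∀ i, ∑ j, (A i j : ℝ) * (xhat j - yA A c θhat j) = 0 := congr_fun
    (eq_zero_of_hasDerivAt_of_tendsto (eventually_atTop.2 ⟨0, hθode⟩) hlim.snd_nhds hθlim)
  have hxeq :=
    eq_zero_of_hasDerivAt_of_tendsto (eventually_atTop.2 ⟨0, hxode⟩) hlim.fst_nhds hxlim
  refine ⟨?_, fun v hv => ?_⟩
  · simpa only [hθeq, neg_zero, zero_div, zero_smul, sum_const_zero] using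
      hasFDerivAt_KL_yA A c xhat (fun j => (hc j).ne') fun i => (hθhat i).ne'
  · refine dotProduct_eq_zero_of_mem_span (fun l => ?_) (fun l => net_rate_eq_mul_exp_neg_sub_one
      (hkp l).ne' (fun i => (hθhat i).ne') hxhat (yA_pos A c hc hθhat) (hrates θhat hθhat l))
      hxeq hv
    exact mul_pos (mul_pos (hkp l) (prod_pos fun i _ => pow_pos (hθhat i) _))
      (prod_pos fun j _ => pow_pos (hxhat j) _)

/-- EM scheme, stationarity of the limit: if the trajectory
`(x(t), θ(t))` of the EM dynamics converges to a strictly positive limit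
`(x̂, θ̂)`, then (i) the gradient of `θ ↦ D(x̂‖y_A(θ))` vanishes at `θ̂`, and
(ii) `log x̂ − log y_A(θ̂)` is orthogonal to the real span of `{b_1,…,b_r}`. -/
theorem em_scheme_limit_stationary
    {m n p r : ℕ} (A : Matrix (Fin m) (Fin n) ℕ) (c : Fin n → ℝ)
    (hc : ∀ j, 0 < c j)
    (𝒮 : Matrix (Fin p) (Fin n) ℤ)
    (b : Fin r → Fin n → ℤ)
    -- `b` is a ℤ-basis of the lattice `(ker 𝒮) ∩ ℤ^n`:
    (hbker : ∀ l, ∀ i, ∑ j, 𝒮 i j * b l j = 0)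
    (hbspan : ∀ v : Fin n → ℤ, (∀ i, ∑ j, 𝒮 i j * v j = 0) →
      ∃ mm : Fin r → ℤ, v = ∑ l, mm l • b l)
    (hbindep : LinearIndependent ℤ b)
    (kp km : Fin r → ℝ) (hkp : ∀ l, 0 < kp l) (hkm : ∀ l, 0 < km l)
    (d e : Fin r → Fin m → ℕ)
    (hrates : ∀ θ' : Fin m → ℝ, (∀ i, 0 < θ' i) → ∀ l,
      km l / kp l * ∏ i, θ' i ^ ((e l i : ℤ) - (d l i : ℤ)) =
        ∏ j, (yA A c θ' j) ^ (b l j))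
    (x : ℝ → Fin n → ℝ) (θ : ℝ → Fin m → ℝ)
    (hxpos : ∀ t, 0 ≤ t → ∀ j, 0 < x t j)
    (hθpos : ∀ t, 0 ≤ t → ∀ i, 0 < θ t i)
    (hxode : ∀ t, 0 ≤ t → HasDerivAt x
      (∑ l, (km l * (∏ i, θ t i ^ e l i) * (∏ j, x t j ^ (-(b l j)).toNat)
            - kp l * (∏ i, θ t i ^ d l i) * (∏ j, x t j ^ (b l j).toNat)) •
        (fun j => (b l j : ℝ))) t)
    (hθode : ∀ t, 0 ≤ t → HasDerivAt θ
      (fun i => ∑ j, (A i j : ℝ) * (x t j - yA A c (θ t) j)) t)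
    (xhat : Fin n → ℝ) (θhat : Fin m → ℝ)
    (hxhat : ∀ j, 0 < xhat j) (hθhat : ∀ i, 0 < θhat i)
    (hlim : Filter.Tendsto (fun t => (x t, θ t)) Filter.atTop (nhds (xhat, θhat))) :
    HasFDerivAt (fun θ' : Fin m → ℝ => KL xhat (yA A c θ'))
        (0 : (Fin m → ℝ) →L[ℝ] ℝ) θhat ∧
    ∀ v : Fin n → ℝ,
      v ∈ Submodule.span ℝ (Set.range fun l => fun j => (b l j : ℝ)) →
      ∑ j, (Real.log (xhat j) - Real.log (yA A c θhat j)) * v j = 0 :=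
  em_scheme_limit_stationary_general A c hc b kp km hkp d e hrates x θ hxode hθode xhat θhat hxhat
    hθhat hlim
end
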